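/- In the two-player interconnected contest with Tullock contest success function with parameter γ ∈ (0,1], in every Nash equilibrium (e_1, e_2) the payoff of each player i ∈ {1,2} satisfies Π_i(e_1,e_2) = Σ_{k∈B} p_i^k (1 − γ p_{-i}^k) v^k, where p_i^k are the equilibrium winning probabilities. -/

import Mathlib

open Finset Matrix

/-- Effective effort of a player with spillover matrix `ρ` and effort vector `e`
at battlefield `k`: `y^k = e^k + ∑_{l ≠ k} ρ^{l,k} e^l`. -/
noncomputable def effY {m : ℕ} (ρ : Matrix (Fin m) (Fin m) ℝ) (e : Fin m → ℝ)
    (k : Fin m) : ℝ :=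
  e k + ∑ l ∈ Finset.univ.erase k, ρ l k * e l

/-- Tullock contest success function with parameter `γ`.  When both effective
efforts are `0` this gives `0/0 = 0`, matching the convention. -/
noncomputable def tullock (γ y₁ y₂ : ℝ) : ℝ :=
  y₁ ^ γ / (y₁ ^ γ + y₂ ^ γ)

/-- Payoff of player `i` in the interconnected contest. -/
noncomputable def payoff {m : ℕ} (γ : ℝ) (v : Fin m → ℝ) (c : Fin 2 → ℝ)
    (ρ : Fin 2 → Matrix (Fin m) (Fin m) ℝ) (e : Fin 2 → Fin m → ℝ) (i : Fin 2) : ℝ :=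
  (∑ k, v k * tullock γ (effY (ρ i) (e i) k) (effY (ρ (1 - i)) (e (1 - i)) k))
    - c i * ∑ k, e i k

/-- Pure strategy Nash equilibrium of the interconnected contest:
nonnegative efforts, and no profitable deviation to any nonnegative effort vector. -/
def IsNashEq {m : ℕ} (γ : ℝ) (v : Fin m → ℝ) (c : Fin 2 → ℝ)
    (ρ : Fin 2 → Matrix (Fin m) (Fin m) ℝ) (e : Fin 2 → Fin m → ℝ) : Prop :=
  (∀ i k, 0 ≤ e i k) ∧
  ∀ (i : Fin 2) (e' : Fin m → ℝ), (∀ k, 0 ≤ e' k) →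
    payoff γ v c ρ (Function.update e i e') i ≤ payoff γ v c ρ e i

/-- Winning probability of player `i` at battlefield `k` under profile `e`. -/
noncomputable def eqProb {m : ℕ} (γ : ℝ) (ρ : Fin 2 → Matrix (Fin m) (Fin m) ℝ)
    (e : Fin 2 → Fin m → ℝ) (i : Fin 2) (k : Fin m) : ℝ :=
  tullock γ (effY (ρ i) (e i) k) (effY (ρ (1 - i)) (e (1 - i)) k)

/-!
At an equilibrium, scaling one's own effort vector by `t ≥ 0` is never profitable, so the
derivative of the payoff along this ray vanishes at `t = 1`. Since `(t y)^γ = t^γ y^γ`, the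
derivative of `p_i^k` along the ray is `γ p_i^k p_{-i}^k`, whence the total cost equals
`∑_k γ p_i^k p_{-i}^k v^k`; subtracting it from the expected prize gives the formula.
-/

open Filter Topology

lemma tullock_zero_left {γ : ℝ} (hγ : γ ≠ 0) (y : ℝ) : tullock γ 0 y = 0 := by
  simp [tullock, Real.zero_rpow hγ]

lemma hasDerivAt_tullock_mul_left {γ y₁ y₂ : ℝ} (hγ : γ ≠ 0) (hy₁ : 0 ≤ y₁) (hy₂ : 0 ≤ y₂) :
    HasDerivAt (fun t => tullock γ (t * y₁) y₂) (γ * tullock γ y₁ y₂ * tullock γ y₂ y₁) 1 := by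
  rcases hy₁.eq_or_lt with rfl | hy₁
  · simp only [mul_zero, tullock_zero_left hγ, zero_mul]
    exact hasDerivAt_const 1 0
  have hpow : HasDerivAt (fun t : ℝ => t ^ γ) γ 1 := by
    simpa using Real.hasDerivAt_rpow_const (x := 1) (p := γ) (Or.inl one_ne_zero)
  have ha : 0 < y₁ ^ γ := Real.rpow_pos_of_pos hy₁ γ
  have hb : 0 ≤ y₂ ^ γ := Real.rpow_nonneg hy₂ γ
  have hquot := (hpow.mul_const (y₁ ^ γ)).div ((hpow.mul_const (y₁ ^ γ)).add_const (y₂ ^ γ))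
    (by rw [Real.one_rpow]; positivity)
  have hscale : (fun t => tullock γ (t * y₁) y₂) =ᶠ[𝓝 1]
      fun t => t ^ γ * y₁ ^ γ / (t ^ γ * y₁ ^ γ + y₂ ^ γ) := by
    filter_upwards [Ioi_mem_nhds zero_lt_one] with t ht
    rw [tullock, Real.mul_rpow ht.le hy₁.le]
  refine (hquot.congr_of_eventuallyEq hscale).congr_deriv ?_
  rw [tullock, tullock, Real.one_rpow]
  field_simp
  ring

lemma effY_nonneg {m : ℕ} {ρ : Matrix (Fin m) (Fin m) ℝ} {e : Fin m → ℝ}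
    (hρ : ∀ k l, 0 ≤ ρ k l) (he : ∀ k, 0 ≤ e k) (k : Fin m) : 0 ≤ effY ρ e k :=
  add_nonneg (he k) (sum_nonneg fun l _ => mul_nonneg (hρ l k) (he l))

lemma effY_smul {m : ℕ} (ρ : Matrix (Fin m) (Fin m) ℝ) (e : Fin m → ℝ) (t : ℝ) (k : Fin m) :
    effY ρ (t • e) k = t * effY ρ e k := by
  simp only [effY, Pi.smul_apply, smul_eq_mul, mul_add, mul_sum]
  congr 1
  exact sum_congr rfl fun l _ => by ring

lemma Fin.two_sub_ne (i : Fin 2) : 1 - i ≠ i := by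
  revert i; decide

lemma payoff_update_smul {m : ℕ} (γ : ℝ) (v : Fin m → ℝ) (c : Fin 2 → ℝ)
    (ρ : Fin 2 → Matrix (Fin m) (Fin m) ℝ) (e : Fin 2 → Fin m → ℝ) (i : Fin 2) (t : ℝ) :
    payoff γ v c ρ (Function.update e i (t • e i)) i =
      (∑ k, v k * tullock γ (t * effY (ρ i) (e i) k) (effY (ρ (1 - i)) (e (1 - i)) k))
        - t * (c i * ∑ k, e i k) := by
  simp only [payoff, Function.update_self, Function.update_of_ne (Fin.two_sub_ne i), effY_smul,
    Pi.smul_apply, smul_eq_mul, ← mul_sum]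
  ring

lemma hasDerivAt_payoff_update_smul {m : ℕ} {γ : ℝ} (hγ : γ ≠ 0) (v : Fin m → ℝ)
    (c : Fin 2 → ℝ) {ρ : Fin 2 → Matrix (Fin m) (Fin m) ℝ} {e : Fin 2 → Fin m → ℝ}
    (hρ : ∀ i k l, 0 ≤ ρ i k l) (he : ∀ i k, 0 ≤ e i k) (i : Fin 2) :
    HasDerivAt (fun t : ℝ => payoff γ v c ρ (Function.update e i (t • e i)) i)
      ((∑ k, v k * (γ * eqProb γ ρ e i k * eqProb γ ρ e (1 - i) k)) - c i * ∑ k, e i k) 1 := by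
  simp only [payoff_update_smul, eqProb, sub_sub_cancel]
  refine HasDerivAt.sub (HasDerivAt.fun_sum fun k _ => HasDerivAt.const_mul (v k) ?_) ?_
  · exact hasDerivAt_tullock_mul_left hγ (effY_nonneg (hρ i) (he i) k)
      (effY_nonneg (hρ (1 - i)) (he (1 - i)) k)
  · simpa using (hasDerivAt_id (1 : ℝ)).mul_const (c i * ∑ k, e i k)

lemma IsNashEq.cost_eq {m : ℕ} {γ : ℝ} (hγ : γ ≠ 0) {v : Fin m → ℝ} {c : Fin 2 → ℝ}
    {ρ : Fin 2 → Matrix (Fin m) (Fin m) ℝ} (hρ : ∀ i k l, 0 ≤ ρ i k l)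
    {e : Fin 2 → Fin m → ℝ} (he : IsNashEq γ v c ρ e) (i : Fin 2) :
    c i * ∑ k, e i k = ∑ k, v k * (γ * eqProb γ ρ e i k * eqProb γ ρ e (1 - i) k) := by
  have hmax : IsLocalMax (fun t : ℝ => payoff γ v c ρ (Function.update e i (t • e i)) i) 1 := by
    filter_upwards [Ioi_mem_nhds zero_lt_one] with t ht
    simpa using he.2 i (t • e i) fun k => mul_nonneg ht.le (he.1 i k)
  have hfoc := hmax.hasDerivAt_eq_zero (hasDerivAt_payoff_update_smul hγ v c hρ he.1 i)
  linarith

theorem equilibrium_payoff_formula_general (m : ℕ) (γ : ℝ) (hγ0 : 0 < γ)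
    (v : Fin m → ℝ)
    (c : Fin 2 → ℝ)
    (ρ : Fin 2 → Matrix (Fin m) (Fin m) ℝ)
    (hρ : ∀ i k l, 0 ≤ ρ i k l)
    (e : Fin 2 → Fin m → ℝ) (he : IsNashEq γ v c ρ e) (i : Fin 2) :
    payoff γ v c ρ e i =
      ∑ k, eqProb γ ρ e i k * (1 - γ * eqProb γ ρ e (1 - i) k) * v k := by
  rw [payoff, he.cost_eq hγ0.ne' hρ i, ← sum_sub_distrib]
  refine sum_congr rfl fun k _ => ?_
  rw [eqProb]
  ring

/-- equilibrium payoff formula. -/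
theorem equilibrium_payoff_formula (m : ℕ) (γ : ℝ) (hγ0 : 0 < γ) (hγ1 : γ ≤ 1)
    (v : Fin m → ℝ) (hv : ∀ k, 0 < v k)
    (c : Fin 2 → ℝ) (hc : ∀ i, 0 < c i)
    (ρ : Fin 2 → Matrix (Fin m) (Fin m) ℝ)
    (hρ : ∀ i k l, 0 ≤ ρ i k l) (hρd : ∀ i k, ρ i k k = 0)
    (e : Fin 2 → Fin m → ℝ) (he : IsNashEq γ v c ρ e) (i : Fin 2) :
    payoff γ v c ρ e i =
      ∑ k, eqProb γ ρ e i k * (1 - γ * eqProb γ ρ e (1 - i) k) * v k :=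
  equilibrium_payoff_formula_general m γ hγ0 v c ρ hρ e he i
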